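/- The 3-prism graph K_3 □ K_2 (the Cartesian product of a triangle and an edge) does not admit a red-blue vertex coloring such that every blue component has at most 2 vertices (is a vertex or an edge) and every red component has minimum degree at least 1 and contains no path with 3 edges. -/
import Mathlib


/-- The 3-prism: two triangles `(false, ·)` and `(true, ·)` joined by a perfect matching. -/
def Prism3 : SimpleGraph (Bool × ZMod 3) :=
  SimpleGraph.fromRel (fun a b =>
    (a.1 = b.1 ∧ b.2 = a.2 + 1) ∨ (a.1 ≠ b.1 ∧ a.2 = b.2))

instance : DecidableRel Prism3.Adj := fun a b =>
  decidable_of_iff (a ≠ b ∧ _) (by rw [Prism3, SimpleGraph.fromRel_adj])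

set_option synthInstance.maxSize 1000
set_option synthInstance.maxHeartbeats 1000000
set_option maxHeartbeats 2000000

/-- The 3-prism has no red-blue coloring with blue components of at most 2 vertices
and red components of min degree ≥ 1 with no path with 3 edges. -/
theorem prism_no_crumby :
    ¬ ∃ red : Bool × ZMod 3 → Bool,
      (∀ v, red v = false → {w | Prism3.Adj v w ∧ red w = false}.Subsingleton) ∧
      (∀ v, red v = true → ∃ w, Prism3.Adj v w ∧ red w = true) ∧
      ¬ ∃ a b c d : Bool × ZMod 3,
          red a = true ∧ red b = true ∧ red c = true ∧ red d = true ∧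
          a ≠ b ∧ a ≠ c ∧ a ≠ d ∧ b ≠ c ∧ b ≠ d ∧ c ≠ d ∧
          Prism3.Adj a b ∧ Prism3.Adj b c ∧ Prism3.Adj c d := by
  simp only [Set.Subsingleton, Set.mem_setOf_eq]
  decide
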